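/- For a nonempty finite set {s_1,...,s_n} of natural numbers with elementary symmetric functions σ_1 = Σ s_i, σ_2 = Σ_{i<j} s_i s_j, etc., the specialization of the series U at σ_k = binom(n,k) satisfies U(x, binom(n,1), binom(n,2), binom(n,3), ...) = Π_{j=1}^{n-1} (1 - j x), where U(x,σ_1,σ_2,...) = 1 - Σ_{m≥1} x^m Σ_{i=m+1}^{2m} σ_i Σ_{j=0}^{2m-i} t_{i,j}(m)(-σ_1)^j. -/

import Mathlib

/-- The integers `t_{i,j}(n)`: `t_{2,0}(1) = 1`,
`t_{i,j}(n) = (i-2) t_{i-1,j}(n-1) + t_{i-1,j-1}(n-1) + (i-3) t_{i-2,j}(n-1)` for `n ≥ 2`,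
and `t_{i,j}(n) = 0` whenever `i ≤ n`, `j < 0` or `i + j > 2n`. -/
def tt : ℕ → ℤ → ℤ → ℤ
  | 0, _, _ => 0
  | 1, i, j => if i = 2 ∧ j = 0 then 1 else 0
  | n + 2, i, j =>
      if i ≤ (n : ℤ) + 2 ∨ j < 0 ∨ 2 * ((n : ℤ) + 2) < i + j then 0
      else (i - 2) * tt (n + 1) (i - 1) j + tt (n + 1) (i - 1) (j - 1)
        + (i - 3) * tt (n + 1) (i - 2) j


open Finset

lemma tt_eq_zero : ∀ (m : ℕ) (i j : ℤ), (i ≤ (m:ℤ) ∨ j < 0 ∨ 2*(m:ℤ) < i + j) → tt m i j = 0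
  | 0, i, j, _ => rfl
  | 1, i, j, h => by
      show (if (i = 2 ∧ j = 0) then (1:ℤ) else 0) = 0
      rw [if_neg]; rintro ⟨rfl, rfl⟩; push_cast at h; rcases h with h|h|h <;> exact h
  | (m+2), i, j, h => by
      show (if i ≤ (m : ℤ) + 2 ∨ j < 0 ∨ 2 * ((m : ℤ) + 2) < i + j then (0:ℤ) else _) = 0
      rw [if_pos (by push_cast at h; exact_mod_cast h)]

lemma tt_rec (m : ℕ) (i j : ℤ) :
    tt (m+2) i j = (i-2) * tt (m+1) (i-1) j + tt (m+1) (i-1) (j-1) + (i-3) * tt (m+1) (i-2) j := by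
  show (if i ≤ (m : ℤ) + 2 ∨ j < 0 ∨ 2 * ((m : ℤ) + 2) < i + j then (0:ℤ) else _) = _
  by_cases h : i ≤ (m:ℤ)+2 ∨ j < 0 ∨ 2*((m:ℤ)+2) < i+j
  · rw [if_pos h]
    have v := tt_eq_zero (m+1)
    rcases h with h | h | h
    · rw [v (i-1) j (by push_cast; omega), v (i-1) (j-1) (by push_cast; omega),
        v (i-2) j (by push_cast; omega)]; ring
    · rw [v (i-1) j (by push_cast; omega), v (i-1) (j-1) (by push_cast; omega),
        v (i-2) j (by push_cast; omega)]; ring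
    · rw [v (i-1) j (by push_cast; omega), v (i-1) (j-1) (by push_cast; omega),
        v (i-2) j (by push_cast; omega)]; ring
  · rw [if_neg h]

def psi (A c : ℕ) : ℕ → ℕ → ℤ
  | 0, b => (A.choose (b+c) : ℤ)
  | m+1, b => -((b:ℤ)+2) * psi A c m (b+1) - ((b:ℤ)+3) * psi A c m (b+2)

lemma keyId (ν k : ℕ) : (k+1) * (ν+1).choose (k+1) + (k+2) * (ν+1).choose (k+2)
    = (ν+1) * (ν+1).choose (k+1) := by
  have h1 := Nat.add_one_mul_choose_eq ν k
  have h2 := Nat.add_one_mul_choose_eq ν (k+1)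
  have h3 : (ν+1).choose (k+1) = ν.choose k + ν.choose (k+1) := Nat.choose_succ_succ ν k
  calc (k+1) * (ν+1).choose (k+1) + (k+2) * (ν+1).choose (k+2)
      = (ν+1).choose (k+1) * (k+1) + (ν+1).choose (k+2) * (k+2) := by ring
    _ = (ν+1) * ν.choose k + (ν+1) * ν.choose (k+1) := by rw [← h1, ← h2]
    _ = (ν+1) * (ν+1).choose (k+1) := by rw [h3]; ring

lemma keyIdZ (ν k : ℕ) : ((k:ℤ)+1) * ((ν+1).choose (k+1) : ℤ) + ((k:ℤ)+2) * ((ν+1).choose (k+2) : ℤ)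
    = ((ν:ℤ)+1) * ((ν+1).choose (k+1) : ℤ) := by exact_mod_cast keyId ν k

lemma psi_pascal (A c : ℕ) : ∀ m b, psi (A+1) (c+1) m b = psi A (c+1) m b + psi A c m b := by
  intro m
  induction m with
  | zero => intro b; show ((A+1).choose (b+(c+1)) : ℤ) = _
            have : (A+1).choose (b+c+1) = A.choose (b+c) + A.choose (b+c+1) :=
              Nat.choose_succ_succ A (b+c)
            show ((A+1).choose (b+(c+1)) : ℤ) = (A.choose (b+(c+1)) : ℤ) + (A.choose (b+c) : ℤ)
            have hb : b+(c+1) = (b+c)+1 := by omega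
            rw [hb, this]; push_cast; ring
  | succ m ih => intro b; show -((b:ℤ)+2) * _ - ((b:ℤ)+3) * _ = _
                 rw [ih (b+1), ih (b+2)]
                 show _ = (-((b:ℤ)+2) * psi A (c+1) m (b+1) - ((b:ℤ)+3) * psi A (c+1) m (b+2))
                   + (-((b:ℤ)+2) * psi A c m (b+1) - ((b:ℤ)+3) * psi A c m (b+2))
                 ring

lemma psi_one (ν : ℕ) : ∀ m b, psi (ν+1) 1 (m+1) b = -((ν:ℤ)+1) * psi (ν+1) 2 m b := by
  intro m
  induction m with
  | zero =>
      intro b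
      show -((b:ℤ)+2) * ((ν+1).choose (b+1+1) : ℤ) - ((b:ℤ)+3) * ((ν+1).choose (b+2+1) : ℤ)
        = -((ν:ℤ)+1) * ((ν+1).choose (b+2) : ℤ)
      have := keyIdZ ν (b+1)
      push_cast at this ⊢
      linear_combination -this
  | succ m ih =>
      intro b
      show -((b:ℤ)+2) * psi (ν+1) 1 (m+1) (b+1) - ((b:ℤ)+3) * psi (ν+1) 1 (m+1) (b+2) = _
      rw [ih (b+1), ih (b+2)]
      show _ = -((ν:ℤ)+1) * (-((b:ℤ)+2) * psi (ν+1) 2 m (b+1) - ((b:ℤ)+3) * psi (ν+1) 2 m (b+2))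
      ring

lemma psi_one_A (b m : ℕ) : psi 1 2 m b = 0 := by
  induction m generalizing b with
  | zero => show ((1:ℕ).choose (b+2) : ℤ) = 0
            rw [Nat.choose_eq_zero_of_lt (by omega)]; rfl
  | succ m ih => show -((b:ℤ)+2) * psi 1 2 m (b+1) - ((b:ℤ)+3) * psi 1 2 m (b+2) = 0
                 rw [ih (b+1), ih (b+2)]; ring

lemma shift1 {N : ℕ} (f : ℕ → ℤ) (h0 : f 0 = 0) :
    ∑ i ∈ range (N+1), f i = ∑ i ∈ range N, f (i+1) := by
  rw [Finset.sum_range_succ' f N, h0, add_zero]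

lemma rect_congr (g : ℕ → ℕ → ℤ) (K M M' : ℕ) (hM : K ≤ M) (hM' : K ≤ M')
    (hg : ∀ i j, K ≤ i ∨ K ≤ j → g i j = 0) :
    ∑ i ∈ range M, ∑ j ∈ range M', g i j = ∑ i ∈ range K, ∑ j ∈ range K, g i j := by
  have inner : ∀ i, ∑ j ∈ range M', g i j = ∑ j ∈ range K, g i j := by
    intro i
    refine (Finset.sum_subset (Finset.range_subset_range.2 hM') ?_).symm
    intro j _ hj
    exact hg i j (Or.inr (by simpa using Finset.mem_range.not.1 hj))
  calc ∑ i ∈ range M, ∑ j ∈ range M', g i j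
      = ∑ i ∈ range M, ∑ j ∈ range K, g i j := Finset.sum_congr rfl (fun i _ => inner i)
    _ = ∑ i ∈ range K, ∑ j ∈ range K, g i j := by
        refine (Finset.sum_subset (Finset.range_subset_range.2 hM) ?_).symm
        intro i _ hi
        exact Finset.sum_eq_zero fun j _ =>
          hg i j (Or.inl (by simpa using Finset.mem_range.not.1 hi))

lemma bridge (ν : ℕ) : ∀ (m b N : ℕ), 2*m+3 ≤ N →
    ∑ i ∈ range N, ∑ j ∈ range N,
      tt (m+1) (i:ℤ) (j:ℤ) * ((ν+1).choose (i+b) : ℤ) * (-((ν:ℤ)+1))^j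
    = psi (ν+1) 2 m b := by
  intro m
  induction m with
  | zero =>
    intro b N hN
    rw [Finset.sum_eq_single_of_mem 2 (Finset.mem_range.2 (by omega))]
    · rw [Finset.sum_eq_single_of_mem 0 (Finset.mem_range.2 (by omega))]
      · show tt 1 ((2:ℕ):ℤ) ((0:ℕ):ℤ) * _ * _ ^ (0:ℕ) = psi (ν+1) 2 0 b
        have h1 : tt 1 ((2:ℕ):ℤ) ((0:ℕ):ℤ) = 1 := by
          show (if ((2:ℕ):ℤ) = 2 ∧ ((0:ℕ):ℤ) = 0 then (1:ℤ) else 0) = 1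
          norm_num
        rw [h1]
        show 1 * ((ν+1).choose (2+b) : ℤ) * _ ^ (0:ℕ) = ((ν+1).choose (b+2) : ℤ)
        rw [show 2+b = b+2 from by omega]; ring
      · intro j _ hj
        have : tt 1 ((2:ℕ):ℤ) ((j:ℕ):ℤ) = 0 := by
          show (if ((2:ℕ):ℤ) = 2 ∧ ((j:ℕ):ℤ) = 0 then (1:ℤ) else 0) = 0
          rw [if_neg]; rintro ⟨-, h2⟩; exact hj (by exact_mod_cast h2)
        rw [this]; ring
    · intro i _ hi
      refine Finset.sum_eq_zero fun j _ => ?_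
      have : tt 1 ((i:ℕ):ℤ) ((j:ℕ):ℤ) = 0 := by
        show (if ((i:ℕ):ℤ) = 2 ∧ ((j:ℕ):ℤ) = 0 then (1:ℤ) else 0) = 0
        rw [if_neg]; rintro ⟨h2, -⟩; exact hi (by exact_mod_cast h2)
      rw [this]; ring
  | succ m ih =>
    intro b N hN
    obtain ⟨K, rfl⟩ : ∃ K, N = K+2 := ⟨N-2, by omega⟩
    have hK : 2*m+3 ≤ K := by omega
    set w : ℤ := -((ν:ℤ)+1) with hw
    have tv := tt_eq_zero (m+1)
    have key : ∀ i b : ℕ, ((i:ℤ)+(b:ℤ)+1) * ((ν+1).choose (i+(b+1)) : ℤ)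
        + ((i:ℤ)+(b:ℤ)+2) * ((ν+1).choose (i+(b+2)) : ℤ)
        = ((ν:ℤ)+1) * ((ν+1).choose (i+(b+1)) : ℤ) := by
      intro i b
      have h := keyIdZ ν (i+b)
      rw [show i+(b+1) = (i+b)+1 from by omega, show i+(b+2) = (i+b)+2 from by omega]
      push_cast at h ⊢
      linarith
    -- vanishing beyond 2m+3 for tt (m+1)
    have van : ∀ i j : ℕ, 2*m+3 ≤ i ∨ 2*m+3 ≤ j → tt (m+1) (i:ℤ) (j:ℤ) = 0 := by
      intro i j h
      refine tv _ _ (Or.inr (Or.inr ?_))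
      push_cast
      omega
    calc ∑ i ∈ range (K+2), ∑ j ∈ range (K+2),
          tt (m+1+1) (i:ℤ) (j:ℤ) * ((ν+1).choose (i+b) : ℤ) * w^j
        = ∑ i ∈ range (K+2), ∑ j ∈ range (K+2),
            (((i:ℤ)-2) * tt (m+1) ((i:ℤ)-1) (j:ℤ) * ((ν+1).choose (i+b) : ℤ) * w^j
            + tt (m+1) ((i:ℤ)-1) ((j:ℤ)-1) * ((ν+1).choose (i+b) : ℤ) * w^j
            + ((i:ℤ)-3) * tt (m+1) ((i:ℤ)-2) (j:ℤ) * ((ν+1).choose (i+b) : ℤ) * w^j) := by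
          refine Finset.sum_congr rfl fun i _ => Finset.sum_congr rfl fun j _ => ?_
          rw [tt_rec m (i:ℤ) (j:ℤ)]; ring
      _ = (∑ i ∈ range (K+2), ∑ j ∈ range (K+2),
            ((i:ℤ)-2) * tt (m+1) ((i:ℤ)-1) (j:ℤ) * ((ν+1).choose (i+b) : ℤ) * w^j)
          + (∑ i ∈ range (K+2), ∑ j ∈ range (K+2),
            tt (m+1) ((i:ℤ)-1) ((j:ℤ)-1) * ((ν+1).choose (i+b) : ℤ) * w^j)
          + (∑ i ∈ range (K+2), ∑ j ∈ range (K+2),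
            ((i:ℤ)-3) * tt (m+1) ((i:ℤ)-2) (j:ℤ) * ((ν+1).choose (i+b) : ℤ) * w^j) := by
          simp [Finset.sum_add_distrib]
      _ = (∑ i ∈ range (2*m+3), ∑ j ∈ range (2*m+3),
            ((i:ℤ)-1) * tt (m+1) (i:ℤ) (j:ℤ) * ((ν+1).choose (i+(b+1)) : ℤ) * w^j)
          + (∑ i ∈ range (2*m+3), ∑ j ∈ range (2*m+3),
            tt (m+1) (i:ℤ) (j:ℤ) * ((ν+1).choose (i+(b+1)) : ℤ) * w^(j+1))
          + (∑ i ∈ range (2*m+3), ∑ j ∈ range (2*m+3),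
            ((i:ℤ)-1) * tt (m+1) (i:ℤ) (j:ℤ) * ((ν+1).choose (i+(b+2)) : ℤ) * w^j) := by
          congr 1
          · congr 1
            · -- piece 1 : shift i by 1
              rw [shift1 (fun i => ∑ j ∈ range (K+2),
                    ((i:ℤ)-2) * tt (m+1) ((i:ℤ)-1) (j:ℤ) * ((ν+1).choose (i+b) : ℤ) * w^j)
                  (Finset.sum_eq_zero fun j _ => by
                    rw [tv (((0:ℕ):ℤ)-1) (j:ℤ) (Or.inl (by push_cast; omega))]; ring)]
              refine Eq.trans (Finset.sum_congr rfl fun i _ => Finset.sum_congr rfl fun j _ => ?_)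
                (rect_congr _ (2*m+3) (K+1) (K+2) (by omega) (by omega)
                  (fun i j h => by rw [van i j h]; ring))
              rw [show i+1+b = i+(b+1) from by omega]
              have e1 : ((i+1:ℕ):ℤ)-1 = (i:ℤ) := by push_cast; ring
              rw [e1]; push_cast; ring
            · -- piece 2 : shift i and j by 1
              rw [shift1 (fun i => ∑ j ∈ range (K+2),
                    tt (m+1) ((i:ℤ)-1) ((j:ℤ)-1) * ((ν+1).choose (i+b) : ℤ) * w^j)
                  (Finset.sum_eq_zero fun j _ => by
                    rw [tv (((0:ℕ):ℤ)-1) ((j:ℤ)-1) (Or.inl (by push_cast; omega))]; ring)]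
              refine Eq.trans (Finset.sum_congr rfl fun i _ => ?_)
                (rect_congr _ (2*m+3) (K+1) (K+1) (by omega) (by omega)
                  (fun i j h => by rw [van i j h]; ring))
              rw [shift1 (fun j =>
                    tt (m+1) (((i+1:ℕ):ℤ)-1) ((j:ℤ)-1) * ((ν+1).choose (i+1+b) : ℤ) * w^j)
                  (by beta_reduce
                      rw [tv (((i+1:ℕ):ℤ)-1) (((0:ℕ):ℤ)-1) (Or.inr (Or.inl (by norm_num)))]
                      ring)]
              refine Finset.sum_congr rfl fun j _ => ?_
              rw [show i+1+b = i+(b+1) from by omega]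
              have e1 : ((i+1:ℕ):ℤ)-1 = (i:ℤ) := by push_cast; ring
              have e2 : ((j+1:ℕ):ℤ)-1 = (j:ℤ) := by push_cast; ring
              rw [e1, e2]
          · -- piece 3 : shift i by 2
            rw [shift1 (fun i => ∑ j ∈ range (K+2),
                  ((i:ℤ)-3) * tt (m+1) ((i:ℤ)-2) (j:ℤ) * ((ν+1).choose (i+b) : ℤ) * w^j)
                (Finset.sum_eq_zero fun j _ => by
                  rw [tv (((0:ℕ):ℤ)-2) (j:ℤ) (Or.inl (by push_cast; omega))]; ring)]
            rw [shift1 (fun i => ∑ j ∈ range (K+2),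
                  (((i+1:ℕ):ℤ)-3) * tt (m+1) (((i+1:ℕ):ℤ)-2) (j:ℤ) * ((ν+1).choose (i+1+b) : ℤ) * w^j)
                (Finset.sum_eq_zero fun j _ => by
                  rw [tv (((0+1:ℕ):ℤ)-2) (j:ℤ) (Or.inl (by push_cast; omega))]; ring)]
            refine Eq.trans (Finset.sum_congr rfl fun i _ => Finset.sum_congr rfl fun j _ => ?_)
              (rect_congr _ (2*m+3) K (K+2) (by omega) (by omega)
                (fun i j h => by rw [van i j h]; ring))
            rw [show i+1+1+b = i+(b+2) from by omega]
            have e1 : ((i+1+1:ℕ):ℤ)-2 = (i:ℤ) := by push_cast; ring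
            rw [e1]; push_cast; ring
      _ = ∑ i ∈ range (2*m+3), ∑ j ∈ range (2*m+3),
            (-((b:ℤ)+2) * (tt (m+1) (i:ℤ) (j:ℤ) * ((ν+1).choose (i+(b+1)) : ℤ) * w^j)
            - ((b:ℤ)+3) * (tt (m+1) (i:ℤ) (j:ℤ) * ((ν+1).choose (i+(b+2)) : ℤ) * w^j)) := by
          rw [← Finset.sum_add_distrib, ← Finset.sum_add_distrib]
          refine Finset.sum_congr rfl fun i _ => ?_
          rw [← Finset.sum_add_distrib, ← Finset.sum_add_distrib]
          refine Finset.sum_congr rfl fun j _ => ?_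
          have hk := key i b
          rw [hw]
          linear_combination (tt (m+1) (i:ℤ) (j:ℤ) * (-((ν:ℤ)+1))^j) * hk
      _ = -((b:ℤ)+2) * psi (ν+1) 2 m (b+1) - ((b:ℤ)+3) * psi (ν+1) 2 m (b+2) := by
          rw [← ih (b+1) (2*m+3) (le_refl _), ← ih (b+2) (2*m+3) (le_refl _)]
          rw [Finset.mul_sum, Finset.mul_sum, ← Finset.sum_sub_distrib]
          refine Finset.sum_congr rfl fun i _ => ?_
          rw [Finset.mul_sum, Finset.mul_sum, ← Finset.sum_sub_distrib]
      _ = psi (ν+1) 2 (m+1) b := rfl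

lemma sumB (ν k : ℕ) :
    ∑ i ∈ Icc (k+1+1) (2*(k+1)), (((ν+1).choose i : ℕ) : ℤ) *
      ∑ j ∈ range (2*(k+1) - i + 1), tt (k+1) (i:ℤ) (j:ℤ) * (-(((ν+1).choose 1 : ℕ):ℤ))^j
    = psi (ν+1) 2 k 0 := by
  rw [← bridge ν k 0 (2*k+3) (le_refl _)]
  have tv := tt_eq_zero (k+1)
  calc ∑ i ∈ Icc (k+1+1) (2*(k+1)), (((ν+1).choose i : ℕ) : ℤ) *
        ∑ j ∈ range (2*(k+1) - i + 1), tt (k+1) (i:ℤ) (j:ℤ) * (-(((ν+1).choose 1 : ℕ):ℤ))^j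
      = ∑ i ∈ Icc (k+1+1) (2*(k+1)), ∑ j ∈ range (2*k+3),
          tt (k+1) (i:ℤ) (j:ℤ) * ((ν+1).choose (i+0) : ℤ) * (-((ν:ℤ)+1))^j := by
        refine Finset.sum_congr rfl fun i hi => ?_
        obtain ⟨hi1, hi2⟩ := Finset.mem_Icc.1 hi
        rw [Finset.mul_sum]
        refine Eq.trans (Finset.sum_congr rfl fun j _ => ?_)
          (Finset.sum_subset (Finset.range_subset_range.2 (by omega)) fun j _ hj => ?_)
        · rw [Nat.choose_one_right, Nat.add_zero]
          push_cast
          ring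
        · rw [tv (i:ℤ) (j:ℤ) (Or.inr (Or.inr (by
            have := Finset.mem_range.not.1 hj
            push_cast
            omega)))]
          ring
    _ = ∑ i ∈ range (2*k+3), ∑ j ∈ range (2*k+3),
          tt (k+1) (i:ℤ) (j:ℤ) * ((ν+1).choose (i+0) : ℤ) * (-((ν:ℤ)+1))^j := by
        refine Finset.sum_subset (fun i hi => Finset.mem_range.2 ?_) fun i hi hi' => ?_
        · obtain ⟨-, h2⟩ := Finset.mem_Icc.1 hi; omega
        · refine Finset.sum_eq_zero fun j _ => ?_
          have h1 := Finset.mem_range.1 hi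
          have h2 := Finset.mem_Icc.not.1 hi'
          rw [tv (i:ℤ) (j:ℤ) (Or.inl (by push_cast; omega))]
          ring

noncomputable def PP (ν : ℕ) : PowerSeries ℤ :=
  ∏ j ∈ Icc 1 ν, (1 - PowerSeries.C (j:ℤ) * PowerSeries.X)

lemma PP_C0 (ν : ℕ) : PowerSeries.constantCoeff (PP ν) = 1 := by
  rw [PP, map_prod]
  refine Finset.prod_eq_one fun j _ => ?_
  simp

lemma coeff_mul_lin (f : PowerSeries ℤ) (a : ℤ) (m : ℕ) :
    PowerSeries.coeff (m+1) (f * (1 - PowerSeries.C a * PowerSeries.X))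
    = PowerSeries.coeff (m+1) f - a * PowerSeries.coeff m f := by
  have h : f * (1 - PowerSeries.C a * PowerSeries.X)
      = f - PowerSeries.C a * (f * PowerSeries.X) := by ring
  rw [h, map_sub, PowerSeries.coeff_C_mul, PowerSeries.coeff_succ_mul_X]

lemma PP_coeff (ν : ℕ) : ∀ m, PowerSeries.coeff (m+1) (PP ν) = - psi (ν+1) 2 m 0 := by
  induction ν with
  | zero =>
    intro m
    rw [PP, show Icc 1 0 = (∅ : Finset ℕ) from rfl, Finset.prod_empty, psi_one_A]
    simp
  | succ ν ih =>
    intro m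
    have hp : PP (ν+1) = PP ν * (1 - PowerSeries.C ((ν+1:ℕ):ℤ) * PowerSeries.X) := by
      rw [PP, PP, Finset.prod_Icc_succ_top (by omega)]
    rw [hp, coeff_mul_lin]
    cases m with
    | zero =>
      rw [ih 0, PowerSeries.coeff_zero_eq_constantCoeff_apply, PP_C0]
      show -psi (ν+1) 2 0 0 - ((ν+1:ℕ):ℤ) * 1 = -psi (ν+2) 2 0 0
      show -((ν+1).choose (0+2) : ℤ) - ((ν+1:ℕ):ℤ) * 1 = -((ν+2).choose (0+2) : ℤ)
      have : (ν+2).choose 2 = (ν+1).choose 1 + (ν+1).choose 2 := Nat.choose_succ_succ (ν+1) 1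
      rw [show (0+2) = 2 from rfl, this, Nat.choose_one_right]
      push_cast
      ring
    | succ m' =>
      rw [ih (m'+1), ih m']
      have h1 : psi (ν+1+1) (1+1) (m'+1) 0 = psi (ν+1) (1+1) (m'+1) 0 + psi (ν+1) 1 (m'+1) 0 :=
        psi_pascal (ν+1) 1 (m'+1) 0
      have h2 : psi (ν+1) 1 (m'+1) 0 = -((ν:ℤ)+1) * psi (ν+1) 2 m' 0 := psi_one ν m' 0
      push_cast
      push_cast at h1 h2
      linear_combination h1 + h2


/-- The specialization of the series
`U(x,σ_1,σ_2,…) = 1 - ∑_{m≥1} x^m ∑_{i=m+1}^{2m} σ_i ∑_{j=0}^{2m-i} t_{i,j}(m)(-σ_1)^j`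
at the elementary symmetric functions `σ_k = binom(n,k)` of `s_1 = ⋯ = s_n = 1`
equals `∏_{j=1}^{n-1} (1 - j x)`. -/
theorem stmt12 (n : ℕ) (hn : 1 ≤ n) (U : PowerSeries ℤ)
    (hU0 : PowerSeries.coeff 0 U = 1)
    (hUm : ∀ m : ℕ, 1 ≤ m → PowerSeries.coeff m U =
      -(∑ i ∈ Finset.Icc (m + 1) (2 * m), (n.choose i : ℤ) *
        ∑ j ∈ Finset.range (2 * m - i + 1),
          tt m (i : ℤ) (j : ℤ) * (-(n.choose 1 : ℤ)) ^ j)) :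
    U = ∏ j ∈ Finset.Icc 1 (n - 1), (1 - PowerSeries.C (j : ℤ) * PowerSeries.X) := by

  obtain ⟨ν, rfl⟩ : ∃ ν, n = ν + 1 := ⟨n - 1, by omega⟩
  have hPP : (∏ j ∈ Finset.Icc 1 (ν + 1 - 1), (1 - PowerSeries.C (j : ℤ) * PowerSeries.X))
      = PP ν := by rw [show ν + 1 - 1 = ν from rfl, PP]
  rw [hPP]
  refine PowerSeries.ext fun k => ?_
  cases k with
  | zero =>
    rw [hU0, PowerSeries.coeff_zero_eq_constantCoeff_apply, PP_C0]
  | succ k =>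
    rw [hUm (k+1) (by omega), PP_coeff ν k, ← sumB ν k]
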